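/- Let ρ and σ be density operators on a finite-dimensional Hilbert space with (1/2)‖ρ − σ‖₁ = ε. Then there exist density operators ρ′ and σ′ such that (1 − ε′)ρ + ε′ρ′ = (1 − ε′)σ + ε′σ′, where ε′ = ε/(1 + ε). -/

import Mathlib

/-!
Write `ρ - σ = P - N` with `P = (ρ - σ)⁺` and `N = (ρ - σ)⁻` positive semidefinite.
Since `tr (ρ - σ) = 0` and `tr P + tr N = ‖ρ - σ‖₁ = 2ε`, both traces equal `ε`, so for
`ε > 0` the operators `ρ' = N / ε` and `σ' = P / ε` are density operators with
`ρ - σ = ε (σ' - ρ')`; scaling this by `1 - ε' = 1 / (1 + ε)` gives the identity.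
For `ε = 0` the trace norm forces `ρ = σ`.
-/

open Matrix BigOperators ComplexOrder

variable {n : Type*} [Fintype n] [DecidableEq n]

/-- The positive semidefinite square root of a positive semidefinite matrix
(as defined in Mathlib of December 2024, since removed). -/
noncomputable def Matrix.PosSemidef.sqrt {m : Type*} {𝕜 : Type*} [Fintype m] [DecidableEq m]
    [RCLike 𝕜] {A : Matrix m m 𝕜} (hA : A.PosSemidef) : Matrix m m 𝕜 :=
  hA.1.eigenvectorUnitary.1 * diagonal ((↑) ∘ Real.sqrt ∘ hA.1.eigenvalues) *
    (star hA.1.eigenvectorUnitary : Matrix m m 𝕜)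

/-- Trace norm (Schatten 1-norm) of a matrix. -/
noncomputable def traceNorm (A : Matrix n n ℂ) : ℝ :=
  ((Matrix.posSemidef_conjTranspose_mul_self A).sqrt.trace).re

/-- A density operator: positive semidefinite with trace 1. -/
def IsDensity (ρ : Matrix n n ℂ) : Prop := ρ.PosSemidef ∧ ρ.trace = 1

open scoped MatrixOrder

namespace Matrix

variable {𝕜 : Type*} [RCLike 𝕜] {A : Matrix n n 𝕜}

lemma IsHermitian.trace_cfc (hA : A.IsHermitian) (f : ℝ → ℝ) :
    (cfc f A).trace = ((∑ i, f (hA.eigenvalues i) : ℝ) : 𝕜) := by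
  rw [hA.cfc_eq, IsHermitian.cfc, Unitary.conjStarAlgAut_apply, trace_mul_cycle,
    Unitary.coe_star_mul_self, one_mul, trace_diagonal, RCLike.ofReal_sum]
  rfl

lemma PosSemidef.sqrt_eq_cfc (hA : A.PosSemidef) : hA.sqrt = cfc Real.sqrt A := by
  rw [hA.1.cfc_eq]
  rfl

lemma IsHermitian.sqrt_conjTranspose_mul_self (hA : A.IsHermitian) :
    (posSemidef_conjTranspose_mul_self A).sqrt = cfc (fun x : ℝ ↦ |x|) A := by
  have hsq : Aᴴ * A = cfc (fun x : ℝ ↦ x * x) A := by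
    rw [hA.eq, cfc_mul (fun x : ℝ ↦ x) (fun x : ℝ ↦ x) A, cfc_id' ℝ A]
  rw [PosSemidef.sqrt_eq_cfc, hsq, ← cfc_comp' Real.sqrt (fun x : ℝ ↦ x * x) A]
  simp only [Real.sqrt_mul_self_eq_abs]

lemma IsHermitian.trace_posPart (hA : A.IsHermitian) :
    A⁺.trace = ((∑ i, (hA.eigenvalues i)⁺ : ℝ) : 𝕜) := by
  rw [CFC.posPart_def, cfcₙ_eq_cfc, hA.trace_cfc]

lemma IsHermitian.trace_negPart (hA : A.IsHermitian) :
    A⁻.trace = ((∑ i, (hA.eigenvalues i)⁻ : ℝ) : 𝕜) := by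
  rw [CFC.negPart_def, cfcₙ_eq_cfc, hA.trace_cfc]

lemma IsHermitian.sum_eigenvalues_eq_zero (hA : A.IsHermitian) (h : A.trace = 0) :
    ∑ i, hA.eigenvalues i = 0 := by
  rw [hA.trace_eq_sum_eigenvalues] at h
  exact_mod_cast h

end Matrix

lemma Finset.sum_posPart_eq_half_sum_abs {ι : Type*} {s : Finset ι} {f : ι → ℝ}
    (h : ∑ i ∈ s, f i = 0) : ∑ i ∈ s, (f i)⁺ = (∑ i ∈ s, |f i|) / 2 := by
  have hadd : ∑ i ∈ s, (f i)⁺ + ∑ i ∈ s, (f i)⁻ = ∑ i ∈ s, |f i| := by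
    rw [← Finset.sum_add_distrib]
    simp only [posPart_add_negPart]
  have hsub : ∑ i ∈ s, (f i)⁺ - ∑ i ∈ s, (f i)⁻ = 0 := by
    rw [← Finset.sum_sub_distrib]
    simpa only [posPart_sub_negPart] using h
  linarith

lemma Finset.sum_negPart_eq_half_sum_abs {ι : Type*} {s : Finset ι} {f : ι → ℝ}
    (h : ∑ i ∈ s, f i = 0) : ∑ i ∈ s, (f i)⁻ = (∑ i ∈ s, |f i|) / 2 := by
  have hneg : ∑ i ∈ s, -f i = 0 := by rw [Finset.sum_neg_distrib, h, neg_zero]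
  simpa only [posPart_neg, abs_neg] using Finset.sum_posPart_eq_half_sum_abs hneg

lemma traceNorm_nonneg (A : Matrix n n ℂ) : 0 ≤ traceNorm A := by
  rw [traceNorm, PosSemidef.sqrt_eq_cfc, (posSemidef_conjTranspose_mul_self A).1.trace_cfc]
  exact Finset.sum_nonneg fun _ _ ↦ Real.sqrt_nonneg _

namespace Matrix.IsHermitian

variable {A : Matrix n n ℂ}

lemma traceNorm_eq_sum_abs_eigenvalues (hA : A.IsHermitian) :
    traceNorm A = ∑ i, |hA.eigenvalues i| := by
  rw [traceNorm, hA.sqrt_conjTranspose_mul_self, hA.trace_cfc]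
  exact Complex.ofReal_re _

lemma eq_zero_of_traceNorm_eq_zero (hA : A.IsHermitian) (h : traceNorm A = 0) : A = 0 := by
  rw [hA.traceNorm_eq_sum_abs_eigenvalues,
    Finset.sum_eq_zero_iff_of_nonneg fun _ _ ↦ abs_nonneg _] at h
  exact hA.eigenvalues_eq_zero_iff.mp (funext fun i ↦ abs_eq_zero.mp (h i (Finset.mem_univ i)))

lemma trace_posPart_eq_half_traceNorm (hA : A.IsHermitian) (h : A.trace = 0) :
    A⁺.trace = (traceNorm A / 2 : ℝ) := by
  rw [hA.trace_posPart, hA.traceNorm_eq_sum_abs_eigenvalues,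
    Finset.sum_posPart_eq_half_sum_abs (hA.sum_eigenvalues_eq_zero h)]
  rfl

lemma trace_negPart_eq_half_traceNorm (hA : A.IsHermitian) (h : A.trace = 0) :
    A⁻.trace = (traceNorm A / 2 : ℝ) := by
  rw [hA.trace_negPart, hA.traceNorm_eq_sum_abs_eigenvalues,
    Finset.sum_negPart_eq_half_sum_abs (hA.sum_eigenvalues_eq_zero h)]
  rfl

end Matrix.IsHermitian

lemma isDensity_inv_smul {m : Type*} [Fintype m] {P : Matrix m m ℂ} (hP : 0 ≤ P) {t : ℝ}
    (ht : P.trace = t) (ht0 : 0 < t) : IsDensity (t⁻¹ • P) := by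
  refine ⟨(nonneg_iff_posSemidef.mp hP).smul (inv_nonneg.mpr ht0.le), ?_⟩
  rw [trace_smul, ht, Complex.real_smul, Complex.ofReal_inv, inv_mul_cancel₀]
  exact_mod_cast ht0.ne'

lemma mix_eq_mix_of_sub_eq_smul {E : Type*} [AddCommGroup E] [Module ℝ E] {x y x' y' : E}
    {ε : ℝ} (hε : 1 + ε ≠ 0) (h : x - y = ε • (y' - x')) :
    (1 - ε / (1 + ε)) • x + (ε / (1 + ε)) • x' =
      (1 - ε / (1 + ε)) • y + (ε / (1 + ε)) • y' := by
  have hcoeff : 1 - ε / (1 + ε) = (1 + ε)⁻¹ := by field_simp; ring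
  rw [hcoeff, div_eq_inv_mul]
  linear_combination (norm := module) (1 + ε)⁻¹ • h

theorem mixing_decomposition (ρ σ : Matrix n n ℂ) (hρ : IsDensity ρ) (hσ : IsDensity σ)
    (ε : ℝ) (hε : (1 / 2) * traceNorm (ρ - σ) = ε) :
    ∃ ρ' σ' : Matrix n n ℂ, IsDensity ρ' ∧ IsDensity σ' ∧
      (1 - ε / (1 + ε)) • ρ + (ε / (1 + ε)) • ρ' =
      (1 - ε / (1 + ε)) • σ + (ε / (1 + ε)) • σ' := by
  have hA : (ρ - σ).IsHermitian := hρ.1.1.sub hσ.1.1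
  have htr : (ρ - σ).trace = 0 := by rw [trace_sub, hρ.2, hσ.2, sub_self]
  have hε' : traceNorm (ρ - σ) / 2 = ε := by linarith
  have hε0 : 0 ≤ ε := hε' ▸ div_nonneg (traceNorm_nonneg _) zero_le_two
  rcases hε0.eq_or_lt with rfl | hεpos
  · obtain rfl : ρ = σ := sub_eq_zero.mp (hA.eq_zero_of_traceNorm_eq_zero (by linarith))
    exact ⟨ρ, ρ, hρ, hρ, rfl⟩
  have hneg : (ρ - σ)⁻.trace = ε := hε' ▸ hA.trace_negPart_eq_half_traceNorm htr
  have hpos : (ρ - σ)⁺.trace = ε := hε' ▸ hA.trace_posPart_eq_half_traceNorm htr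
  have hsub : ρ - σ = ε • (ε⁻¹ • (ρ - σ)⁺ - ε⁻¹ • (ρ - σ)⁻) := by
    rw [← smul_sub, smul_inv_smul₀ hεpos.ne', CFC.posPart_sub_negPart _ hA]
  have hρ' := isDensity_inv_smul (CFC.negPart_nonneg (ρ - σ)) hneg hεpos
  have hσ' := isDensity_inv_smul (CFC.posPart_nonneg (ρ - σ)) hpos hεpos
  exact ⟨_, _, hρ', hσ', mix_eq_mix_of_sub_eq_smul (by positivity) hsub⟩
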